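/- arXiv:1705.10987 — 4 statements merged into one kernel-verified Lean document; each statement's English description precedes it below -/
import Mathlib

section
/- Let b ≥ 2 and let A be a function from {1,…,n} to ℕ with n = b^e. Define the layered structure where level ℓ+1 stores, for each block of b consecutive elements of A, the b-1 prefix sums of the first b-1 elements, and recursively for the array A' of block totals A'[j] = ∑_{l=1}^b A[(j-1)b + l]. Then for every i with 1 ≤ i ≤ n, writing i in base b as (x_1…x_{ℓ+1})_b, the sum ∑_{t=1}^i A[t] equals the sum over all levels j with x_j ≠ 0 of T_b^j(A)[o_j], where o_1 = x_1 and o_j = (b-1)·(x_1…x_{j-1})_b + x_j for j > 1. -/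
/-!
The partial digit sums `s_j = (x_0 … x_{j-1} 0 … 0)_b` increase from `s_0 = 0` to
`s_{e+1} = i`, so `(0, i]` is the disjoint union of the blocks `(s_j, s_{j+1}]`. Writing
`p_j = (x_0 … x_{j-1})_b`, the offset `(b-1)·p_j + x_j` decodes to block `q = p_j` and
remainder `r = x_j`, so the level-`(j+1)` entry there stores exactly the block
`(p_j·b·b^{e-j}, (p_j·b + x_j)·b^{e-j}] = (s_j, s_{j+1}]`; blocks with `x_j = 0` are empty.
-/

open Finset

/-- Entry at offset `o = (b-1)·q + r` (with `1 ≤ r ≤ b-1`) of level `j` of the layered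
`b`-ary Fenwick tree over `A` (indexed from 1, `n = b^ℓ`): it stores the sum of the
positions of `A` in the interval `(q·b·b^{ℓ+1-j}, (q·b + r)·b^{ℓ+1-j}]`. -/
def fenEntry (b ℓ j : ℕ) (A : ℕ → ℕ) (o : ℕ) : ℕ :=
  ∑ t ∈ Finset.Ioc ((((o - 1) / (b - 1)) * b) * b ^ (ℓ + 1 - j))
      ((((o - 1) / (b - 1)) * b + ((o - 1) % (b - 1) + 1)) * b ^ (ℓ + 1 - j)), A t

theorem Finset.sum_range_sum_Ioc_of_monotone {M : Type*} [AddCommMonoid M] {s : ℕ → ℕ}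
    (hs : Monotone s) (f : ℕ → M) (m : ℕ) :
    ∑ j ∈ range m, ∑ t ∈ Ioc (s j) (s (j + 1)), f t = ∑ t ∈ Ioc (s 0) (s m), f t := by
  induction m with
  | zero => simp
  | succ m ih =>
    rw [sum_range_succ, ih, sum_Ioc_consecutive _ (hs m.zero_le) (hs m.le_succ)]

theorem fenEntry_mul_add {b : ℕ} (ℓ j : ℕ) (A : ℕ → ℕ) (q : ℕ) {r : ℕ} (hr0 : 0 < r)
    (hrb : r < b) :
    fenEntry b ℓ j A ((b - 1) * q + r) =
      ∑ t ∈ Ioc (q * b * b ^ (ℓ + 1 - j)) ((q * b + r) * b ^ (ℓ + 1 - j)), A t := by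
  have hb : 0 < b - 1 := by omega
  have hoff : (b - 1) * q + r - 1 = (b - 1) * q + (r - 1) := by omega
  have hdiv : ((b - 1) * q + r - 1) / (b - 1) = q := by
    rw [hoff, Nat.mul_add_div hb, Nat.div_eq_of_lt (by omega), add_zero]
  have hmod : ((b - 1) * q + r - 1) % (b - 1) + 1 = r := by
    rw [hoff, Nat.mul_add_mod, Nat.mod_eq_of_lt (by omega)]
    omega
  rw [fenEntry, hdiv, hmod]

theorem sum_range_mul_pow_mul_pow {R : Type*} [CommSemiring R] (x : ℕ → R) (b : R)
    {j e : ℕ} (hje : j ≤ e) :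
    (∑ t ∈ range j, x t * b ^ (j - 1 - t)) * b * b ^ (e - j) =
      ∑ t ∈ range j, x t * b ^ (e - t) := by
  rw [sum_mul, sum_mul]
  refine sum_congr rfl fun t ht => ?_
  have hexp : j - 1 - t + 1 + (e - j) = e - t := by
    have := mem_range.mp ht
    omega
  rw [← hexp, pow_add, pow_add, pow_one]
  ring

theorem fenEntry_digit {b e j : ℕ} (A : ℕ → ℕ) (x : ℕ → ℕ) (hje : j ≤ e) (hx0 : x j ≠ 0)
    (hxb : x j < b) :
    fenEntry b e (j + 1) A ((b - 1) * (∑ t ∈ range j, x t * b ^ (j - 1 - t)) + x j) =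
      ∑ t ∈ Ioc (∑ t ∈ range j, x t * b ^ (e - t)) (∑ t ∈ range (j + 1), x t * b ^ (e - t)),
        A t := by
  rw [fenEntry_mul_add e (j + 1) A _ (Nat.pos_of_ne_zero hx0) hxb, Nat.add_sub_add_right,
    add_mul _ (x j), sum_range_mul_pow_mul_pow x b hje, sum_range_succ]

theorem fenwick_sum_correct_general (b e : ℕ)
    (A : ℕ → ℕ) (i : ℕ)
    (x : ℕ → ℕ) (hx : ∀ j < e + 1, x j < b)
    (hrep : i = ∑ j ∈ Finset.range (e + 1), x j * b ^ (e - j)) :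
    ∑ t ∈ Finset.Icc 1 i, A t =
      ∑ j ∈ (Finset.range (e + 1)).filter (fun j => x j ≠ 0),
        fenEntry b e (j + 1) A
          ((b - 1) * (∑ t ∈ Finset.range j, x t * b ^ (j - 1 - t)) + x j) := by
  set s : ℕ → ℕ := fun j => ∑ t ∈ range j, x t * b ^ (e - t) with hs
  have hmono : Monotone s := monotone_nat_of_le_succ fun j => by
    simp only [hs, sum_range_succ, Nat.le_add_right]
  have hblocks :
      ∑ t ∈ Icc 1 i, A t = ∑ j ∈ range (e + 1), ∑ t ∈ Ioc (s j) (s (j + 1)), A t := by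
    rw [sum_range_sum_Ioc_of_monotone hmono, ← Icc_add_one_left_eq_Ioc, hrep]
    simp [hs]
  rw [hblocks, sum_filter]
  refine sum_congr rfl fun j hjmem => ?_
  have hj : j < e + 1 := mem_range.mp hjmem
  by_cases hxj : x j = 0
  · simp [hs, sum_range_succ, hxj]
  · rw [if_pos hxj, fenEntry_digit A x (Nat.lt_succ_iff.mp hj) hxj (hx j hj)]

/-- Correctness of the `sum` query in the `b`-ary Fenwick tree: writing
`i = (x_1 … x_{ℓ+1})_b` in base `b` (here `0`-indexed: digit `j` has weight `b^{ℓ-j}`),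
the prefix sum `∑_{t=1}^i A[t]` equals the sum, over levels `j` with nonzero digit,
of the tree entry at offset `o_j = (b-1)·(x_1…x_{j-1})_b + x_j`. -/
theorem fenwick_sum_correct (b e n : ℕ) (hb : 2 ≤ b) (hn : n = b ^ e)
    (A : ℕ → ℕ) (i : ℕ) (hi1 : 1 ≤ i) (hin : i ≤ n)
    (x : ℕ → ℕ) (hx : ∀ j < e + 1, x j < b)
    (hrep : i = ∑ j ∈ Finset.range (e + 1), x j * b ^ (e - j)) :
    ∑ t ∈ Finset.Icc 1 i, A t =
      ∑ j ∈ (Finset.range (e + 1)).filter (fun j => x j ≠ 0),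
        fenEntry b e (j + 1) A
          ((b - 1) * (∑ t ∈ Finset.range j, x t * b ^ (j - 1 - t)) + x j) :=
  fenwick_sum_correct_general b e A i x hx hrep
end

section
/- In the binary Fenwick tree over n = 2^e elements, for every index i, the tree entry at position i equals ∑_{t = i - 2^{ν(i)} + 1}^{i} A[t], where 2^{ν(i)} is the largest power of two dividing i; and the recursive construction (replace A[2i] with A[2i-1]+A[2i] in each block of 2, then recurse on even positions) produces exactly this array. -/
open Finset

/-- Fenwick's recursive construction over an array of `2^e` elements (indexed from 1):
if `e = 0` leave `A` unchanged; otherwise replace `A[2i]` by `A[2i-1] + A[2i]` in each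
block of two and recurse on the array of block sums, which occupies the even positions. -/
def fenRec : ℕ → (ℕ → ℕ) → (ℕ → ℕ)
  | 0, A => A
  | e + 1, A => fun i =>
      if i % 2 = 1 then A i
      else fenRec e (fun j => A (2 * j - 1) + A (2 * j)) (i / 2)

/-! Odd positions are never touched, and there `ν(i) = 0`. The entry at an even position `2j`
is entry `j` of the tree built on the pair sums `A[2t-1] + A[2t]`; by induction this is the sum
of the `2^ν(j)` pairs ending with pair `j`, i.e. of the `2^(ν(j)+1) = 2^ν(2j)` entries of `A`
ending at `2j`. -/

theorem sum_pairs_Ioc_eq_sum_Ioc_two_mul {M : Type*} [AddCommMonoid M] (f : ℕ → M) {a b : ℕ}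
    (hab : a ≤ b) :
    ∑ t ∈ Ioc a b, (f (2 * t - 1) + f (2 * t)) = ∑ s ∈ Ioc (2 * a) (2 * b), f s := by
  induction b, hab using Nat.le_induction with
  | base => simp
  | succ b hab ih =>
    rw [sum_Ioc_succ_top hab, ih, show 2 * (b + 1) = 2 * b + 1 + 1 by ring,
      sum_Ioc_succ_top (by omega), sum_Ioc_succ_top (by omega), Nat.add_sub_cancel]
    exact (add_assoc _ _ _).symm

theorem fenRec_of_odd (e : ℕ) (A : ℕ → ℕ) {i : ℕ} (hi : i % 2 = 1) : fenRec e A i = A i := by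
  cases e <;> simp [fenRec, hi]

theorem fenRec_succ_two_mul (e : ℕ) (A : ℕ → ℕ) (j : ℕ) :
    fenRec (e + 1) A (2 * j) = fenRec e (fun j => A (2 * j - 1) + A (2 * j)) j := by
  simp [fenRec]

theorem padicValNat_two_two_mul {j : ℕ} (hj : j ≠ 0) :
    padicValNat 2 (2 * j) = padicValNat 2 j + 1 := by
  rw [padicValNat.mul two_ne_zero hj, padicValNat_self, add_comm]

/-- In the binary Fenwick tree over `n = 2^e` elements, the tree entry at position `i`
equals `∑_{t = i - 2^{ν(i)} + 1}^{i} A[t]`, where `2^{ν(i)}` is the largest power of two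
dividing `i`; i.e., the recursive construction produces exactly this array. -/
theorem fenwick_binary_entries (e : ℕ) (A : ℕ → ℕ) :
    ∀ i : ℕ, 1 ≤ i → i ≤ 2 ^ e →
      fenRec e A i = ∑ t ∈ Finset.Ioc (i - 2 ^ (padicValNat 2 i)) i, A t := by
  induction e generalizing A with
  | zero =>
    intro i hi₁ hi
    obtain rfl : i = 1 := by omega
    simp [fenRec]
  | succ e ih =>
    intro i hi₁ hi
    rcases Nat.even_or_odd' i with ⟨j, rfl | rfl⟩
    · have hj : j ≠ 0 := by omega
      rw [fenRec_succ_two_mul, ih _ j (by omega) (by rw [pow_succ] at hi; omega),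
        sum_pairs_Ioc_eq_sum_Ioc_two_mul A (Nat.sub_le _ _), padicValNat_two_two_mul hj,
        pow_succ, Nat.mul_sub, mul_comm 2 (2 ^ _)]
    · have hν : padicValNat 2 (2 * j + 1) = 0 := padicValNat.eq_zero_of_not_dvd (by omega)
      rw [fenRec_of_odd _ _ (by omega), hν, pow_zero, Nat.add_sub_cancel,
        Nat.Ioc_succ_singleton, sum_singleton]
end

section
/- The recurrence S_b(1,k) = k, S_b(n,k) = (n(b-1)/b)(k + log b) + nw/b + S_b(n/b, k + log b) for n = b^e satisfies S_b(n,k) ≤ nk + 2n·log b + nw/(b-1). -/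
/-!
Induction on `e`, generalising over `k`: the word terms telescope because
`b x/(b-1) = x + x/(b-1)`, and the one extra `log b` charged per level is absorbed by
`2 n log b` as soon as `b ≥ 2`.
-/

section UnrolledRecurrence

variable {β L w : ℝ}

lemma mul_div_sub_one_eq_add_div_sub_one (hβ : 1 < β) (x : ℝ) :
    β * x / (β - 1) = x + x / (β - 1) := by
  have : β - 1 ≠ 0 := by linarith
  field_simp
  ring

lemma unrolled_bound_succ (hβ : 2 ≤ β) (hL : 0 ≤ L) {n : ℝ} (hn : 0 ≤ n) (k : ℝ) :
    n * (β - 1) * (k + L) + n * w + (n * (k + L) + 2 * n * L + n * w / (β - 1))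
      ≤ β * n * k + 2 * (β * n) * L + β * n * w / (β - 1) := by
  have hword : β * n * w / (β - 1) = n * w + n * w / (β - 1) := by
    rw [mul_assoc, mul_div_sub_one_eq_add_div_sub_one (by linarith)]
  have hlog : 2 * n * L ≤ β * n * L := by gcongr
  rw [hword]
  nlinarith

theorem le_of_unrolled_recurrence (hβ : 2 ≤ β) (hL : 0 ≤ L) (hw : 0 ≤ w)
    (T : ℕ → ℝ → ℝ) (hT0 : ∀ k, T 0 k = k)
    (hTsucc : ∀ e k, T (e + 1) k = β ^ e * (β - 1) * (k + L) + β ^ e * w + T e (k + L)) :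
    ∀ e k, T e k ≤ β ^ e * k + 2 * β ^ e * L + β ^ e * w / (β - 1) := by
  intro e
  induction e with
  | zero =>
    intro k
    have : 0 ≤ w / (β - 1) := div_nonneg hw (by linarith)
    simp only [hT0, pow_zero, one_mul]
    linarith
  | succ e ih =>
    intro k
    have hpow : 0 ≤ β ^ e := pow_nonneg (by linarith) e
    rw [hTsucc, pow_succ']
    linarith [ih (k + L), unrolled_bound_succ (w := w) hβ hL hpow k]

end UnrolledRecurrence

/-- The recurrence `S_b(1,k) = k`,
`S_b(n,k) = (n(b-1)/b)(k + log b) + nw/b + S_b(n/b, k + log b)` for `n = b^e`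
(the extra `nw/b` term accounting for one `w`-bit word per block of `b-1` entries)
satisfies `S_b(n,k) ≤ nk + 2n·log b + nw/(b-1)` (log in base 2). -/
theorem fenwick_space_with_words (b : ℕ) (hb : 2 ≤ b) (w : ℝ) (hw : 0 ≤ w)
    (S : ℕ → ℝ → ℝ)
    (hS1 : ∀ k : ℝ, S 1 k = k)
    (hSrec : ∀ (e : ℕ) (k : ℝ), 1 ≤ e →
      S (b ^ e) k = ((b : ℝ) ^ e * ((b : ℝ) - 1) / (b : ℝ)) * (k + Real.logb 2 b)
        + (b : ℝ) ^ e * w / (b : ℝ)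
        + S (b ^ (e - 1)) (k + Real.logb 2 b)) :
    ∀ (e : ℕ) (k : ℝ), 0 ≤ k →
      S (b ^ e) k ≤ (b : ℝ) ^ e * k + 2 * (b : ℝ) ^ e * Real.logb 2 b
        + (b : ℝ) ^ e * w / ((b : ℝ) - 1) := by
  have hb' : (2 : ℝ) ≤ b := by exact_mod_cast hb
  have hlog : 0 ≤ Real.logb 2 b := Real.logb_nonneg one_lt_two (by linarith)
  have hsucc : ∀ (e : ℕ) (k : ℝ), S (b ^ (e + 1)) k = (b : ℝ) ^ e * ((b : ℝ) - 1) *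
      (k + Real.logb 2 b) + (b : ℝ) ^ e * w + S (b ^ e) (k + Real.logb 2 b) := by
    intro e k
    have hb0 : (b : ℝ) ≠ 0 := by positivity
    rw [hSrec (e + 1) k (by omega), Nat.add_sub_cancel, pow_succ]
    field_simp
  intro e k _
  exact le_of_unrolled_recurrence hb' hlog hw (fun e k => S (b ^ e) k)
    (by simpa using hS1) hsucc e k
end

section
/- Let i = (x_1 … x_{ℓ+1})_b in base b and for each j with x_j ≠ 0 define o_j = (b-1)·(x_1…x_{j-1})_b + x_j (with o_1 = x_1). Then for distinct levels j < j' with nonzero digits, the intervals of A covered by entry o_j at level j and entry o_{j'} at level j' are disjoint, and their union over all nonzero-digit levels is exactly [1, i]. -/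
/-!
Write `S j = ∑ t < j, x t * b ^ (e - t)` for the value of the first `j` digits of `i`, placed at
their positions. Shifting the prefix `(x_0 … x_{j-1})_b` by the block size `b ^ (e + 1 - j)` gives
`S j`, so the entry of level `j` covers exactly `(S j, S (j + 1)]`. Since `S` is monotone, these
intervals are pairwise disjoint and telescope to `(S 0, S (e + 1)] = (0, i]`; the levels with
`x j = 0` contribute empty intervals.
-/

open Finset

theorem Monotone.pairwise_disjoint_on_finset_Ioc_succ {β : Type*} [Preorder β]
    [LocallyFiniteOrder β] {S : ℕ → β} (hS : Monotone S) :
    Pairwise (Function.onFun Disjoint fun n => Ioc (S n) (S (n + 1))) := fun _ _ hmn => by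
  simpa only [Function.onFun, ← disjoint_coe, coe_Ioc, Order.succ_eq_add_one]
    using hS.pairwise_disjoint_on_Ioc_succ hmn

theorem Monotone.biUnion_range_Ioc_succ {β : Type*} [LinearOrder β] [LocallyFiniteOrder β]
    {S : ℕ → β} (hS : Monotone S) :
    ∀ n, (range n).biUnion (fun j => Ioc (S j) (S (j + 1))) = Ioc (S 0) (S n)
  | 0 => by simp
  | n + 1 => by
    rw [range_add_one, biUnion_insert, hS.biUnion_range_Ioc_succ n, union_comm,
      Ioc_union_Ioc_eq_Ioc (hS n.zero_le) (hS n.le_succ)]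

theorem Finset.biUnion_filter_of_eq_empty {ι α : Type*} [DecidableEq α] {s : Finset ι}
    {p : ι → Prop} [DecidablePred p] {f : ι → Finset α} (h : ∀ i ∈ s, ¬p i → f i = ∅) :
    (s.filter p).biUnion f = s.biUnion f := by
  refine Subset.antisymm (biUnion_subset_biUnion_of_subset_left f (filter_subset p s)) ?_
  refine biUnion_subset.2 fun i hi a ha => mem_biUnion.2 ⟨i, mem_filter.2 ⟨hi, ?_⟩, ha⟩
  by_contra hp
  simp [h i hi hp] at ha

theorem sum_range_mul_pow_shift {R : Type*} [CommSemiring R] (x : ℕ → R) (b : R) {j e : ℕ}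
    (hj : j ≤ e) :
    (∑ t ∈ range j, x t * b ^ (j - 1 - t)) * b * b ^ (e - j) =
      ∑ t ∈ range j, x t * b ^ (e - t) := by
  rw [sum_mul, sum_mul]
  refine sum_congr rfl fun t ht => ?_
  have ht : t < j := mem_range.1 ht
  rw [mul_assoc, mul_assoc, ← pow_succ', ← pow_add,
    show j - 1 - t + (e - j + 1) = e - t by omega]

theorem Ioc_prefix_level_eq (x : ℕ → ℕ) (b : ℕ) {j e : ℕ} (hj : j ≤ e) :
    Ioc ((∑ t ∈ range j, x t * b ^ (j - 1 - t)) * b * b ^ (e - j))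
        (((∑ t ∈ range j, x t * b ^ (j - 1 - t)) * b + x j) * b ^ (e - j)) =
      Ioc (∑ t ∈ range j, x t * b ^ (e - t)) (∑ t ∈ range (j + 1), x t * b ^ (e - t)) := by
  rw [add_mul, sum_range_mul_pow_shift x b hj, sum_range_succ]

theorem fenwick_interval_decomposition_general (b e : ℕ) (i : ℕ) (x : ℕ → ℕ)
    (hrep : i = ∑ j ∈ Finset.range (e + 1), x j * b ^ (e - j)) :
    (((Finset.range (e + 1)).filter (fun j => x j ≠ 0) : Set ℕ).PairwiseDisjoint
        (fun j => Finset.Ioc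
          ((∑ t ∈ Finset.range j, x t * b ^ (j - 1 - t)) * b * b ^ (e - j))
          (((∑ t ∈ Finset.range j, x t * b ^ (j - 1 - t)) * b + x j) * b ^ (e - j)))) ∧
    ((Finset.range (e + 1)).filter (fun j => x j ≠ 0)).biUnion
        (fun j => Finset.Ioc
          ((∑ t ∈ Finset.range j, x t * b ^ (j - 1 - t)) * b * b ^ (e - j))
          (((∑ t ∈ Finset.range j, x t * b ^ (j - 1 - t)) * b + x j) * b ^ (e - j)))
      = Finset.Icc 1 i := by
  set S : ℕ → ℕ := fun j => ∑ t ∈ range j, x t * b ^ (e - t)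
  have hS : Monotone S := fun _ _ h => sum_le_sum_of_subset (range_subset_range.2 h)
  have hlevel (j : ℕ) (hj : j ∈ range (e + 1)) :=
    Ioc_prefix_level_eq x b (mem_range_succ_iff.1 hj)
  constructor
  · intro j hj j' hj' hne
    rw [coe_filter] at hj hj'
    simp only [Function.onFun, hlevel j hj.1, hlevel j' hj'.1]
    exact hS.pairwise_disjoint_on_finset_Ioc_succ hne
  · have hzero (j : ℕ) (_ : j ∈ range (e + 1)) (hxj : ¬x j ≠ 0) : Ioc (S j) (S (j + 1)) = ∅ := by
      simp [S, sum_range_succ, not_not.1 hxj]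
    rw [biUnion_congr rfl fun j hj => hlevel j (mem_filter.1 hj).1,
      biUnion_filter_of_eq_empty hzero, hS.biUnion_range_Ioc_succ, ← Icc_add_one_left_eq_Ioc, hrep]
    rfl

/-- Interval-decomposition lemma for the `sum` query of the `b`-ary Fenwick tree:
writing `i = (x_1 … x_{ℓ+1})_b` in base `b` (`0`-indexed digits, `n = b^e`, `ℓ = e`),
the entry at offset `o_j = (b-1)·(x_1…x_{j-1})_b + x_j` of level `j` covers the interval
`((x_1…x_{j-1})_b·b·b^{ℓ+1-j}, ((x_1…x_{j-1})_b·b + x_j)·b^{ℓ+1-j}]` of `A`; these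
intervals are pairwise disjoint over the levels with nonzero digit, and their union is
exactly `[1, i]`. -/
theorem fenwick_interval_decomposition (b e n : ℕ) (hb : 2 ≤ b) (hn : n = b ^ e)
    (i : ℕ) (hi1 : 1 ≤ i) (hin : i ≤ n)
    (x : ℕ → ℕ) (hx : ∀ j < e + 1, x j < b)
    (hrep : i = ∑ j ∈ Finset.range (e + 1), x j * b ^ (e - j)) :
    (((Finset.range (e + 1)).filter (fun j => x j ≠ 0) : Set ℕ).PairwiseDisjoint
        (fun j => Finset.Ioc
          ((∑ t ∈ Finset.range j, x t * b ^ (j - 1 - t)) * b * b ^ (e - j))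
          (((∑ t ∈ Finset.range j, x t * b ^ (j - 1 - t)) * b + x j) * b ^ (e - j)))) ∧
    ((Finset.range (e + 1)).filter (fun j => x j ≠ 0)).biUnion
        (fun j => Finset.Ioc
          ((∑ t ∈ Finset.range j, x t * b ^ (j - 1 - t)) * b * b ^ (e - j))
          (((∑ t ∈ Finset.range j, x t * b ^ (j - 1 - t)) * b + x j) * b ^ (e - j)))
      = Finset.Icc 1 i :=
  fenwick_interval_decomposition_general b e i x hrep
end
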